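/- Let a > 0 be real and let x be a real number with x ≤ −1. Then lim_{n→∞} a^n · C_n(x;a)/(−x)_n = e^a. -/

import Mathlib

/-!
Put `c = -x` and substitute `j = n - k` in the Charlier sum: since `(-n)_j = (-1)^j n!/(n-j)!` and
`(c)_n = (c)_{n-k} (c+n-k)_k`, one gets `aⁿ C_n(x;a) / (c)_n = ∑_{k ≤ n} C(n,k) aᵏ / (c+n-k)_k`.
For fixed `k` the `k`-th term tends to `aᵏ/k!`, and because `Re c ≥ 1` the denominator dominates
`(n-k+1)_k = C(n,k) k!`, so every term is bounded by `|a|ᵏ/k!`. Tannery's theorem then gives the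
limit `∑ aᵏ/k! = eᵃ`.
-/

open Filter Topology Finset

/-- The Pochhammer symbol (rising factorial) `(u)_k = u (u+1) ⋯ (u+k-1)`, with `(u)_0 = 1`. -/
noncomputable def poch (u : ℂ) (k : ℕ) : ℂ := ∏ i ∈ range k, (u + i)

/-- The Charlier polynomial `C_n(x; a) = ∑_{j=0}^n (−n)_j (−x)_j / j! · (−1/a)^j`. -/
noncomputable def charlier (a : ℝ) (n : ℕ) (x : ℂ) : ℂ :=
  ∑ j ∈ range (n + 1),
    poch (-(n : ℂ)) j * poch (-x) j / (j.factorial : ℂ) * (-(1 / (a : ℂ))) ^ j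

open scoped Nat

lemma poch_add (u : ℂ) (m k : ℕ) : poch u (m + k) = poch u m * poch (u + m) k := by
  simp only [poch, prod_range_add, Nat.cast_add, add_assoc]

lemma poch_natCast (n k : ℕ) : poch n k = n.ascFactorial k := by
  simp [poch, Nat.ascFactorial_eq_prod_range]

lemma poch_neg_natCast {n j : ℕ} (h : j ≤ n) :
    poch (-n) j = (-1) ^ j * n.descFactorial j := by
  rw [poch, Nat.descFactorial_eq_prod_range, Nat.cast_prod,
    show (-1 : ℂ) ^ j = ∏ _i ∈ range j, (-1 : ℂ) by simp, ← prod_mul_distrib]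
  refine prod_congr rfl fun i hi => ?_
  rw [Nat.cast_sub ((mem_range.mp hi).le.trans h)]
  ring

lemma poch_ne_zero {u : ℂ} (hu : 0 < u.re) (k : ℕ) : poch u k ≠ 0 :=
  prod_ne_zero_iff.mpr fun i _ => Complex.ne_zero_of_re_pos <| by
    simp only [Complex.add_re, Complex.natCast_re]; positivity

lemma ascFactorial_le_norm_poch {u : ℂ} (hu : 1 ≤ u.re) (m k : ℕ) :
    ((m + 1).ascFactorial k : ℝ) ≤ ‖poch (u + m) k‖ := by
  rw [Nat.ascFactorial_eq_prod_range, Nat.cast_prod, poch, norm_prod]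
  refine prod_le_prod (fun _ _ => by positivity) fun i _ => ?_
  calc ((m + 1 + i : ℕ) : ℝ) ≤ (u + m + i).re := by
        simp only [Complex.add_re, Complex.natCast_re, Nat.cast_add, Nat.cast_one]; linarith
    _ ≤ ‖u + m + i‖ := Complex.re_le_norm _

/-- The `k`-th term of `aⁿ C_n(x;a) / (−x)_n` after the substitution `j = n - k` in the
Charlier sum, with `c = -x`. -/
noncomputable def charlierTerm (a c : ℂ) (n k : ℕ) : ℂ :=
  n.choose k * a ^ k / poch (c + (n - k : ℕ)) k

lemma charlierTerm_of_lt {a c : ℂ} {n k : ℕ} (h : n < k) : charlierTerm a c n k = 0 := by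
  simp [charlierTerm, Nat.choose_eq_zero_of_lt h]

lemma norm_charlierTerm_le {c : ℂ} (hc : 1 ≤ c.re) (a : ℂ) (n k : ℕ) :
    ‖charlierTerm a c n k‖ ≤ ‖a‖ ^ k / k ! := by
  rcases lt_or_ge n k with h | h
  · rw [charlierTerm_of_lt h, norm_zero]; positivity
  obtain ⟨m, rfl⟩ := Nat.exists_eq_add_of_le' h
  have hchoose : ((m + k).choose k : ℝ) * k ! = (m + 1).ascFactorial k := by
    rw [Nat.ascFactorial_eq_factorial_mul_choose]; push_cast; ring
  have hpos : (0 : ℝ) < (m + 1).ascFactorial k := by exact_mod_cast Nat.ascFactorial_pos _ _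
  have hP := ascFactorial_le_norm_poch hc m k
  rw [charlierTerm, Nat.add_sub_cancel, norm_div, norm_mul, norm_pow, Complex.norm_natCast,
    div_le_div_iff₀ (hpos.trans_le hP) (by positivity)]
  calc ((m + k).choose k : ℝ) * ‖a‖ ^ k * k ! = ‖a‖ ^ k * (m + 1).ascFactorial k := by
        rw [← hchoose]; ring
    _ ≤ ‖a‖ ^ k * ‖poch (c + m) k‖ := by gcongr

lemma tendsto_natCast_add_div_natCast_add (u v : ℂ) :
    Tendsto (fun m : ℕ => ((m : ℂ) + u) / (m + v)) atTop (𝓝 1) := by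
  simpa [add_comm] using tendsto_add_mul_div_add_mul_atTop_nhds u v 1 one_ne_zero

lemma tendsto_charlierTerm (a c : ℂ) (k : ℕ) :
    Tendsto (fun n => charlierTerm a c n k) atTop (𝓝 (a ^ k / k !)) := by
  rw [← tendsto_add_atTop_iff_nat k]
  have hratio : Tendsto (fun m : ℕ => poch ((m : ℂ) + 1) k / poch (c + m) k) atTop (𝓝 1) := by
    simp only [poch, ← prod_div_distrib]
    simpa [add_assoc, add_comm c] using tendsto_finsetProd (range k)
      fun i _ => tendsto_natCast_add_div_natCast_add (1 + i) (c + i)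
  have hlim := hratio.const_mul (a ^ k / k !)
  rw [mul_one] at hlim
  refine hlim.congr fun m => ?_
  have hchoose : ((m + k).choose k : ℂ) = poch ((m : ℂ) + 1) k / k ! := by
    rw [← Nat.cast_succ, poch_natCast, Nat.ascFactorial_eq_factorial_mul_choose]
    push_cast
    rw [mul_div_cancel_left₀ _ (Nat.cast_ne_zero.mpr k.factorial_ne_zero)]
  rw [charlierTerm, Nat.add_sub_cancel, hchoose]
  ring

lemma charlier_summand_eq {a : ℂ} (ha : a ≠ 0) {c : ℂ} {j k : ℕ} (hc : poch c (j + k) ≠ 0) :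
    a ^ (j + k) * (poch (-((j + k : ℕ) : ℂ)) j * poch c j / j ! * (-(1 / a)) ^ j) /
      poch c (j + k) = charlierTerm a c (j + k) k := by
  rw [poch_add] at hc ⊢
  obtain ⟨hcj, hcjk⟩ := mul_ne_zero_iff.mp hc
  have hdesc : ((j + k).descFactorial j : ℂ) = j ! * (j + k).choose k := by
    rw [Nat.descFactorial_eq_factorial_mul_choose, Nat.choose_symm_add]; push_cast; ring
  have hsign : (-(1 / a)) ^ j * (-1) ^ j * a ^ j = 1 := by
    rw [← mul_pow, ← mul_pow, show -(1 / a) * -1 * a = 1 by field_simp, one_pow]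
  rw [charlierTerm, Nat.add_sub_cancel, poch_neg_natCast (Nat.le_add_right j k), hdesc]
  have hfac : (j ! : ℂ) ≠ 0 := Nat.cast_ne_zero.mpr j.factorial_ne_zero
  field_simp
  linear_combination ((j + k).choose k * a ^ k : ℂ) * hsign

lemma pow_mul_charlier_div_poch {a : ℝ} (ha : a ≠ 0) {x : ℂ} {n : ℕ} (hx : poch (-x) n ≠ 0) :
    (a : ℂ) ^ n * charlier a n x / poch (-x) n = ∑ k ∈ range (n + 1), charlierTerm a (-x) n k := by
  rw [charlier, mul_sum, sum_div, ← sum_range_reflect]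
  refine sum_congr rfl fun k hk => ?_
  obtain ⟨j, rfl⟩ := Nat.exists_eq_add_of_le' (mem_range_succ_iff.mp hk)
  rw [show j + k + 1 - 1 - k = j by omega]
  exact charlier_summand_eq (Complex.ofReal_ne_zero.mpr ha) hx

lemma tendsto_sum_charlierTerm {c : ℂ} (hc : 1 ≤ c.re) (a : ℂ) :
    Tendsto (fun n => ∑ k ∈ range (n + 1), charlierTerm a c n k) atTop (𝓝 (Complex.exp a)) := by
  have hlim := tendsto_tsum_of_dominated_convergence (Real.summable_pow_div_factorial ‖a‖)
    (tendsto_charlierTerm a c) (.of_forall (norm_charlierTerm_le hc a))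
  rw [Complex.exp_eq_exp_ℂ, NormedSpace.exp_eq_tsum_div]
  refine hlim.congr fun n => tsum_eq_sum fun k hk => charlierTerm_of_lt ?_
  simpa using hk

/-- For `a > 0` and real `x ≤ −1`, `lim_{n→∞} aⁿ C_n(x;a) / (−x)_n = e^a`. -/
theorem charlier_limit_of_le_neg_one (a : ℝ) (ha : 0 < a) (x : ℝ) (hx : x ≤ -1) :
    Tendsto (fun n : ℕ => (a : ℂ) ^ n * charlier a n (x : ℂ) / poch (-(x : ℂ)) n)
      atTop (𝓝 (Real.exp a : ℂ)) := by
  have hc : 1 ≤ (-(x : ℂ)).re := by simpa using neg_le_neg hx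
  rw [Complex.ofReal_exp]
  refine (tendsto_sum_charlierTerm hc a).congr fun n => ?_
  rw [pow_mul_charlier_div_poch ha.ne' (poch_ne_zero (by linarith) n)]
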